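/- Let g be a bounded measurable q-periodic function on ℝ with zero mean over one period, and let f ∈ W^{1,1}(0,H) (hence continuous on [0,H]) vanish at least at one point of [0,H]. Then for every ε > 0, |∫_0^H g(x/ε) f(x) dx| ≤ 2 ε q ‖g‖_{L∞(ℝ)} ‖f'‖_{L¹(0,H)}. -/

import Mathlib

open MeasureTheory Set Real

/-!
Put `Φ x = ∫ t in 0..x, g (t / ε)`. The function `g (· / ε)` is `q ε`-periodic with zero mean,
so `Φ` is `q ε`-periodic and `|Φ| ≤ ε q M`. Since `f` vanishes at `x₀`, `f x = ∫ t in x₀..x, f' t`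
on `[0, H]`, so `|f| ≤ ‖f'‖₁` there. Integration by parts for absolutely continuous functions gives
`∫₀ᴴ Φ' f = Φ H * f H - ∫₀ᴴ Φ f'`, and each term is at most `ε q M ‖f'‖₁`.
-/

lemma intervalIntegrable_of_abs_le {g : ℝ → ℝ} {M : ℝ} (hg : Measurable g)
    (hgM : ∀ x, |g x| ≤ M) (a b : ℝ) : IntervalIntegrable g volume a b :=
  intervalIntegrable_const.mono_fun' hg.aestronglyMeasurable (ae_of_all _ hgM)

namespace Function.Periodic

variable {g : ℝ → ℝ} {q : ℝ}

theorem periodic_intervalIntegral_of_integral_eq_zero (hg : Periodic g q)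
    (hint : ∀ a b, IntervalIntegrable g volume a b) (hmean : ∫ x in 0..q, g x = 0) :
    Periodic (fun y => ∫ x in 0..y, g x) q := by
  intro y
  simp only [hg.intervalIntegral_add_eq_add 0 y hint, zero_add, hmean, add_zero]

theorem abs_intervalIntegral_le_of_integral_eq_zero {M : ℝ} (hg : Periodic g q) (hq : 0 < q)
    (hint : IntervalIntegrable g volume 0 q) (hmean : ∫ x in 0..q, g x = 0)
    (hgM : ∀ x, |g x| ≤ M) (y : ℝ) : |∫ x in 0..y, g x| ≤ q * M := by
  obtain ⟨z, ⟨hz0, hzq⟩, hzy⟩ :=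
    (hg.periodic_intervalIntegral_of_integral_eq_zero (hg.intervalIntegrable₀ hq.ne' hint)
      hmean).exists_mem_Ico₀ hq y
  have hM : 0 ≤ M := (abs_nonneg _).trans (hgM 0)
  calc |∫ x in 0..y, g x| = |∫ x in 0..z, g x| := congrArg abs hzy
    _ ≤ M * |z - 0| :=
        intervalIntegral.norm_integral_le_of_norm_le_const (f := g) fun x _ => hgM x
    _ ≤ q * M := by rw [sub_zero, abs_of_nonneg hz0]; nlinarith

end Function.Periodic

theorem intervalIntegral.integral_primitive_mul_eq_sub {φ ψ : ℝ → ℝ} {a b c d : ℝ}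
    (hφ : IntervalIntegrable φ volume a b) (hψ : IntervalIntegrable ψ volume a b)
    (hc : c ∈ uIcc a b) (hd : d ∈ uIcc a b) :
    ∫ x in a..b, (∫ t in c..x, φ t) * ψ x =
      (∫ t in c..b, φ t) * (∫ t in d..b, ψ t) - (∫ t in c..a, φ t) * (∫ t in d..a, ψ t) -
        ∫ x in a..b, φ x * ∫ t in d..x, ψ t := by
  have hΦ := hφ.absolutelyContinuousOnInterval_intervalIntegral hc
  have hΨ := hψ.absolutelyContinuousOnInterval_intervalIntegral hd
  have hderiv : ∀ {θ : ℝ → ℝ} {e : ℝ}, IntervalIntegrable θ volume a b → e ∈ uIcc a b →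
      ∀ᵐ x, x ∈ uIoc a b → θ x = deriv (fun y => ∫ t in e..y, θ t) x := fun hθ he => by
    filter_upwards [hθ.ae_hasDerivAt_integral] with x hx hxab
    exact (hx (uIoc_subset_uIcc hxab) _ he).deriv.symm
  calc ∫ x in a..b, (∫ t in c..x, φ t) * ψ x
      = ∫ x in a..b, (∫ t in c..x, φ t) * deriv (fun y => ∫ t in d..y, ψ t) x :=
        intervalIntegral.integral_congr_ae <| by
          filter_upwards [hderiv hψ hd] with x hx hxab using by rw [hx hxab]
    _ = _ := hΦ.integral_mul_deriv_eq_deriv_mul hΨ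
    _ = _ := by
      congr 1
      refine intervalIntegral.integral_congr_ae ?_
      filter_upwards [hderiv hφ hc] with x hx hxab using by rw [hx hxab]

theorem abs_integral_primitive_mul_le {φ ψ : ℝ → ℝ} {a b c C : ℝ} (hab : a ≤ b)
    (hφ : IntervalIntegrable φ volume a b) (hψ : IntervalIntegrable ψ volume a b)
    (hc : c ∈ Icc a b) (hC : ∀ x ∈ Icc a b, |∫ t in a..x, ψ t| ≤ C) :
    |∫ x in a..b, (∫ t in c..x, φ t) * ψ x| ≤ 2 * C * ∫ x in a..b, |φ x| := by
  rw [intervalIntegral.integral_primitive_mul_eq_sub hφ hψ (Icc_subset_uIcc hc) left_mem_uIcc,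
    intervalIntegral.integral_same, mul_zero, sub_zero]
  have hC0 : 0 ≤ C := (abs_nonneg _).trans (hC a (left_mem_Icc.2 hab))
  have hφc : |∫ t in c..b, φ t| ≤ ∫ t in a..b, |φ t| :=
    (intervalIntegral.abs_integral_le_integral_abs hc.2).trans <|
      intervalIntegral.integral_mono_interval hc.1 hc.2 le_rfl
        (ae_of_all _ fun t => abs_nonneg (φ t)) hφ.abs
  have hφΨ : |∫ x in a..b, φ x * ∫ t in a..x, ψ t| ≤ C * ∫ x in a..b, |φ x| :=
    (intervalIntegral.norm_integral_le_of_norm_le (f := fun x => φ x * ∫ t in a..x, ψ t) hab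
      (ae_of_all _ fun x hx => by
        rw [norm_mul, mul_comm]
        exact mul_le_mul_of_nonneg_right (hC x (Ioc_subset_Icc_self hx)) (abs_nonneg _))
      (hφ.abs.const_mul C)).trans_eq (intervalIntegral.integral_const_mul _ _)
  calc |(∫ t in c..b, φ t) * (∫ t in a..b, ψ t) - ∫ x in a..b, φ x * ∫ t in a..x, ψ t|
      ≤ |∫ t in c..b, φ t| * |∫ t in a..b, ψ t| + |∫ x in a..b, φ x * ∫ t in a..x, ψ t| := by
        rw [← abs_mul]; exact abs_sub _ _
    _ ≤ (∫ t in a..b, |φ t|) * C + C * ∫ t in a..b, |φ t| := by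
        gcongr
        · exact (abs_nonneg _).trans hφc
        · exact hC b (right_mem_Icc.2 hab)
    _ = 2 * C * ∫ x in a..b, |φ x| := by ring

theorem eqOn_intervalIntegral_of_eq_zero {f f' : ℝ → ℝ} {a b x₀ : ℝ}
    (hf' : IntervalIntegrable f' volume a b)
    (hf : ∀ x ∈ Icc a b, f x = f a + ∫ t in a..x, f' t) (hx₀ : x₀ ∈ Icc a b) (hfx₀ : f x₀ = 0) :
    EqOn f (fun x => ∫ t in x₀..x, f' t) (Icc a b) := by
  intro x hx
  show f x = ∫ t in x₀..x, f' t
  have hint : ∀ y ∈ Icc a b, IntervalIntegrable f' volume a y := fun y hy =>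
    hf'.mono_set (uIcc_subset_uIcc left_mem_uIcc (Icc_subset_uIcc hy))
  rw [← intervalIntegral.integral_interval_sub_left (hint x hx) (hint x₀ hx₀)]
  linarith [hf x hx, hf x₀ hx₀]

/-- **Lemma 3.4 (oscillation lemma).** If `g` is a bounded measurable `q`-periodic function
on `ℝ` with zero mean over one period and `f ∈ W^{1,1}(0,H)` (written here through its
absolutely-continuous representation with derivative `f'`) vanishes at some point of `[0,H]`,
then `|∫_0^H g(x/ε) f(x) dx| ≤ 2 ε q ‖g‖_{L∞} ‖f'‖_{L¹(0,H)}`. -/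
theorem stmt0
    (H q ε M : ℝ) (hH : 0 < H) (hq : 0 < q) (hε : 0 < ε)
    (g : ℝ → ℝ) (hgmeas : Measurable g)
    (hgbd : ∀ x : ℝ, |g x| ≤ M)
    (hgper : Function.Periodic g q)
    (hgmean : (∫ x in (0:ℝ)..q, g x) = 0)
    (f f' : ℝ → ℝ)
    (hf'int : IntervalIntegrable f' volume 0 H)
    (hfAC : ∀ x ∈ Set.Icc (0:ℝ) H, f x = f 0 + ∫ t in (0:ℝ)..x, f' t)
    (hzero : ∃ x₀ ∈ Set.Icc (0:ℝ) H, f x₀ = 0) :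
    |∫ x in (0:ℝ)..H, g (x / ε) * f x|
      ≤ 2 * ε * q * M * ∫ t in (0:ℝ)..H, |f' t| := by
  obtain ⟨x₀, hx₀, hfx₀⟩ := hzero
  set φ : ℝ → ℝ := fun x => g (x / ε)
  have hφint : ∀ a b, IntervalIntegrable φ volume a b :=
    intervalIntegrable_of_abs_le (hgmeas.comp (measurable_div_const ε)) fun x => hgbd _
  have hφmean : ∫ x in 0..q * ε, φ x = 0 := by
    simp only [φ, intervalIntegral.integral_comp_div _ hε.ne', zero_div,
      mul_div_cancel_right₀ _ hε.ne', hgmean, smul_zero]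
  have hΦ : ∀ x ∈ Icc 0 H, |∫ t in 0..x, φ t| ≤ ε * q * M := fun x _ =>
    ((hgper.div_const ε).abs_intervalIntegral_le_of_integral_eq_zero (by positivity) (hφint _ _)
      hφmean (fun y => hgbd _) x).trans_eq (by ring)
  have hf : EqOn f (fun x => ∫ t in x₀..x, f' t) (Icc 0 H) :=
    eqOn_intervalIntegral_of_eq_zero hf'int hfAC hx₀ hfx₀
  calc |∫ x in 0..H, φ x * f x| = |∫ x in 0..H, (∫ t in x₀..x, f' t) * φ x| := by
        rw [intervalIntegral.integral_congr fun x hx => by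
          rw [hf (uIcc_of_le hH.le ▸ hx), mul_comm]]
    _ ≤ 2 * (ε * q * M) * ∫ t in 0..H, |f' t| :=
        abs_integral_primitive_mul_le hH.le hf'int (hφint 0 H) hx₀ hΦ
    _ = 2 * ε * q * M * ∫ t in 0..H, |f' t| := by ring
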